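/- Let d ≥ 2, let X be a random vector in ℝ^d distributed according to the standard Gaussian measure N(0, I_d), and let v ∈ ℝ^d be a fixed unit vector. For any target false positive rate δ ∈ (0, 1], if the threshold τ ∈ [0, 1] satisfies τ ≥ √(2·ln(1/δ)/(d−1)), then the probability that ⟨X, v⟩ ≥ τ‖X‖ is at most δ. -/

import Mathlib

open MeasureTheory Real
open scoped RealInnerProductSpace ENNReal

/-- The standard Gaussian measure `N(0, I_d)` on `ℝ^d`, realized as `EuclideanSpace ℝ (Fin d)`:
the product of `d` one-dimensional standard normal distributions. -/
noncomputable def stdGaussian (d : ℕ) : Measure (EuclideanSpace ℝ (Fin d)) :=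
  (Measure.pi fun _ : Fin d => ProbabilityTheory.gaussianReal 0 1).map
    (MeasurableEquiv.toLp 2 (Fin d → ℝ))

/-! By rotation invariance we may take `v = e₀`. Given the other coordinates `z`, the event
`τ ‖X‖ ≤ X₀` (for `τ < 1`) says `X₀ ≥ c ‖z‖` with `c² = τ² / (1 - τ²)`, which has probability at
most `exp (-c² ‖z‖² / 2)` by the Chernoff bound. Averaging over the `d - 1` independent
coordinates of `z` gives `(1 + c²)^(-(d-1)/2) = (1 - τ²)^((d-1)/2) ≤ exp (-(d-1) τ² / 2) ≤ δ`.
For `τ ≥ 1` the event forces `X₁ = 0`, so it is null. -/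

section
open ProbabilityTheory

lemma integral_exp_neg_mul_sq_gaussianReal (b : ℝ) :
    ∫ x, exp (-b * x ^ 2) ∂gaussianReal 0 1 = (√(2 * b + 1))⁻¹ := by
  have hpdf (x : ℝ) : gaussianPDFReal 0 1 x * exp (-b * x ^ 2)
      = (√(2 * π))⁻¹ * exp (-(b + 2⁻¹) * x ^ 2) := by
    rw [gaussianPDFReal, mul_assoc, ← exp_add]
    congr 2 <;> simp; ring
  simp_rw [integral_gaussianReal_eq_integral_smul one_ne_zero, smul_eq_mul, hpdf,
    integral_const_mul, integral_gaussian, ← sqrt_inv,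
    ← sqrt_mul (inv_nonneg.mpr (by positivity : (0 : ℝ) ≤ 2 * π))]
  congr 1
  field_simp

lemma integral_exp_neg_mul_sum_sq_pi_gaussianReal {ι : Type*} [Fintype ι] (b : ℝ) :
    ∫ z, exp (-b * ∑ i, z i ^ 2) ∂(Measure.pi fun _ : ι => gaussianReal 0 1)
      = (√(2 * b + 1))⁻¹ ^ Fintype.card ι := by
  simp_rw [Finset.mul_sum, exp_sum]
  rw [integral_fintype_prod_eq_pow (fun x => exp (-b * x ^ 2)),
    integral_exp_neg_mul_sq_gaussianReal]

lemma measureReal_gaussianReal_Ici_le {a : ℝ} (ha : 0 ≤ a) :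
    (gaussianReal 0 1).real (Set.Ici a) ≤ exp (-a ^ 2 / 2) :=
  calc (gaussianReal 0 1).real (Set.Ici a)
      ≤ exp (-a * a) * mgf id (gaussianReal 0 1) a :=
        measure_ge_le_exp_mul_mgf a ha (integrable_exp_mul_gaussianReal a)
    _ = exp (-a ^ 2 / 2) := by
        rw [mgf_id_gaussianReal, ← exp_add]
        congr 1
        push_cast
        ring

lemma cone_slice_subset_Ici {τ q : ℝ} (hτ0 : 0 ≤ τ) (hτ1 : τ < 1) (hq : 0 ≤ q) :
    {x : ℝ | τ * √(x ^ 2 + q) ≤ x} ⊆ Set.Ici √(τ ^ 2 * q / (1 - τ ^ 2)) := by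
  intro x (hx : τ * √(x ^ 2 + q) ≤ x)
  have hx0 : 0 ≤ x := by
    have : 0 ≤ τ * √(x ^ 2 + q) := by positivity
    linarith
  have hsq : τ ^ 2 * (x ^ 2 + q) ≤ x ^ 2 := by
    have := pow_le_pow_left₀ (by positivity) hx 2
    rwa [mul_pow, sq_sqrt (by positivity)] at this
  refine sqrt_le_iff.mpr ⟨hx0, ?_⟩
  rw [div_le_iff₀ (by nlinarith)]
  nlinarith

lemma pi_gaussianReal_cone_eq_lintegral_slice (n : ℕ) (τ : ℝ) :
    Measure.pi (fun _ : Fin (n + 1) => gaussianReal 0 1) {y | τ * √(∑ i, y i ^ 2) ≤ y 0}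
      = ∫⁻ z, gaussianReal 0 1 {x | τ * √(x ^ 2 + ∑ i, z i ^ 2) ≤ x}
          ∂(Measure.pi fun _ : Fin n => gaussianReal 0 1) := by
  have hsplit :=
    (measurePreserving_piFinSuccAbove (fun _ : Fin (n + 1) => gaussianReal 0 1) 0).symm
  have hpre : (MeasurableEquiv.piFinSuccAbove (fun _ : Fin (n + 1) => ℝ) 0).symm ⁻¹'
        {y | τ * √(∑ i, y i ^ 2) ≤ y 0}
      = {p : ℝ × (Fin n → ℝ) | τ * √(p.1 ^ 2 + ∑ i, p.2 i ^ 2) ≤ p.1} := by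
    ext ⟨x, z⟩
    simp [Fin.sum_univ_succ, Fin.insertNthEquiv]
  rw [← hsplit.map_eq,
    Measure.map_apply hsplit.measurable (measurableSet_le (by fun_prop) (by fun_prop)), hpre]
  exact Measure.prod_apply_symm (measurableSet_le (by fun_prop) measurable_fst)

lemma pi_gaussianReal_cone_le (n : ℕ) {τ : ℝ} (hτ0 : 0 ≤ τ) (hτ1 : τ < 1) :
    Measure.pi (fun _ : Fin (n + 1) => gaussianReal 0 1) {y | τ * √(∑ i, y i ^ 2) ≤ y 0}
      ≤ ENNReal.ofReal (√(1 - τ ^ 2) ^ n) := by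
  have hτ2 : 0 < 1 - τ ^ 2 := by nlinarith
  set b := τ ^ 2 / (1 - τ ^ 2) / 2 with hb
  have hslice (z : Fin n → ℝ) : gaussianReal 0 1 {x | τ * √(x ^ 2 + ∑ i, z i ^ 2) ≤ x}
      ≤ ENNReal.ofReal (exp (-b * ∑ i, z i ^ 2)) := by
    have hq : 0 ≤ ∑ i, z i ^ 2 := by positivity
    refine (measure_mono (cone_slice_subset_Ici hτ0 hτ1 hq)).trans ?_
    rw [← ofReal_measureReal]
    refine ENNReal.ofReal_le_ofReal
      ((measureReal_gaussianReal_Ici_le (sqrt_nonneg _)).trans_eq ?_)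
    rw [sq_sqrt (by positivity), hb]
    ring_nf
  have hint : Integrable (fun z : Fin n → ℝ => exp (-b * ∑ i, z i ^ 2))
      (Measure.pi fun _ : Fin n => gaussianReal 0 1) :=
    Integrable.of_bound (Measurable.aestronglyMeasurable (by fun_prop)) 1 (ae_of_all _ fun z => by
      rw [norm_of_nonneg (exp_nonneg _), exp_le_one_iff, neg_mul, neg_nonpos]
      positivity)
  calc _ = _ := pi_gaussianReal_cone_eq_lintegral_slice n τ
    _ ≤ ∫⁻ z, ENNReal.ofReal (exp (-b * ∑ i, z i ^ 2))
          ∂(Measure.pi fun _ : Fin n => gaussianReal 0 1) := lintegral_mono hslice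
    _ = ENNReal.ofReal (√(1 - τ ^ 2) ^ n) := by
      rw [← ofReal_integral_eq_lintegral_ofReal hint (ae_of_all _ fun _ => exp_nonneg _),
        integral_exp_neg_mul_sum_sq_pi_gaussianReal, Fintype.card_fin, ← sqrt_inv, hb]
      congr 3
      field_simp
      ring

lemma pi_gaussianReal_cone_eq_zero (n : ℕ) {τ : ℝ} (hτ : 1 ≤ τ) :
    Measure.pi (fun _ : Fin (n + 2) => gaussianReal 0 1) {y | τ * √(∑ i, y i ^ 2) ≤ y 0} = 0 := by
  have := nullSingletonClass_gaussianReal (μ := 0) one_ne_zero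
  refine measure_mono_null (fun y (hy : τ * √(∑ i, y i ^ 2) ≤ y 0) => ?_)
    (Measure.pi_eval_preimage_null _ (measure_singleton (0 : ℝ)) (i := 1))
  have hy' : √(∑ i, y i ^ 2) ≤ y 0 := by nlinarith [sqrt_nonneg (∑ i, y i ^ 2)]
  have hsum : y 0 ^ 2 + (y 1 ^ 2 + ∑ i : Fin n, y i.succ.succ ^ 2) ≤ y 0 ^ 2 := by
    simpa only [Fin.sum_univ_succ, Fin.succ_zero_eq_one] using (sqrt_le_iff.mp hy').2
  have hrest : 0 ≤ ∑ i : Fin n, y i.succ.succ ^ 2 := by positivity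
  exact pow_eq_zero_iff two_ne_zero |>.mp (le_antisymm (by linarith) (sq_nonneg _))

lemma sqrt_one_sub_sq_le_exp (t : ℝ) : √(1 - t ^ 2) ≤ exp (-t ^ 2 / 2) := by
  rw [exp_half]
  exact sqrt_le_sqrt (by linarith [add_one_le_exp (-t ^ 2)])

lemma pi_gaussianReal_cone_le_exp (n : ℕ) {τ : ℝ} (hτ : 0 ≤ τ) :
    Measure.pi (fun _ : Fin (n + 2) => gaussianReal 0 1) {y | τ * √(∑ i, y i ^ 2) ≤ y 0}
      ≤ ENNReal.ofReal (exp (-((n + 1) * τ ^ 2 / 2))) := by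
  rcases lt_or_ge τ 1 with hτ1 | hτ1
  · refine (pi_gaussianReal_cone_le (n + 1) hτ hτ1).trans (ENNReal.ofReal_le_ofReal ?_)
    calc √(1 - τ ^ 2) ^ (n + 1) ≤ exp (-τ ^ 2 / 2) ^ (n + 1) := by
          gcongr
          exact sqrt_one_sub_sq_le_exp τ
      _ = exp (-((n + 1) * τ ^ 2 / 2)) := by
          rw [← exp_nat_mul]
          push_cast
          ring_nf
  · simp [pi_gaussianReal_cone_eq_zero n hτ1]

lemma ProbabilityTheory.stdGaussian_cone_eq_of_norm_eq {E : Type*} [NormedAddCommGroup E]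
    [InnerProductSpace ℝ E] [FiniteDimensional ℝ E] [MeasurableSpace E] [BorelSpace E]
    (τ : ℝ) {u v : E} (huv : ‖u‖ = ‖v‖) :
    stdGaussian E {x | τ * ‖x‖ ≤ ⟪x, v⟫} = stdGaussian E {x | τ * ‖x‖ ≤ ⟪x, u⟫} := by
  set L := (ℝ ∙ (u - v))ᗮ.reflection
  have hLu : L u = v := Submodule.reflection_sub huv
  have hpre : L ⁻¹' {x | τ * ‖x‖ ≤ ⟪x, v⟫} = {x | τ * ‖x‖ ≤ ⟪x, u⟫} := by
    ext x
    simp only [Set.mem_preimage, Set.mem_ofPred_eq, L.norm_map, ← hLu, L.inner_map_map]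
  calc stdGaussian E {x | τ * ‖x‖ ≤ ⟪x, v⟫}
      = (stdGaussian E).map L {x | τ * ‖x‖ ≤ ⟪x, v⟫} := by rw [stdGaussian_map]
    _ = stdGaussian E {x | τ * ‖x‖ ≤ ⟪x, u⟫} := by
      rw [Measure.map_apply L.continuous.measurable (measurableSet_le (by fun_prop) (by fun_prop)),
        hpre]

end

lemma exp_neg_mul_sq_le_of_sqrt_le {m δ τ : ℝ} (hm : 0 < m) (hδ : 0 < δ)
    (hτ : √(2 * log (1 / δ) / m) ≤ τ) : exp (-(m * τ ^ 2 / 2)) ≤ δ := by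
  have h := (sqrt_le_iff.mp hτ).2
  rw [div_le_iff₀ hm, one_div, log_inv] at h
  calc exp (-(m * τ ^ 2 / 2)) ≤ exp (log δ) := exp_le_exp.mpr (by linarith)
    _ = δ := exp_log hδ

lemma stdGaussian_cone_eq_pi (n : ℕ) (τ : ℝ) {v : EuclideanSpace ℝ (Fin (n + 1))}
    (hv : ‖v‖ = 1) :
    stdGaussian (n + 1) {x | τ * ‖x‖ ≤ ⟪x, v⟫}
      = Measure.pi (fun _ : Fin (n + 1) => ProbabilityTheory.gaussianReal 0 1)
          {y | τ * √(∑ i, y i ^ 2) ≤ y 0} := by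
  rw [stdGaussian, MeasurableEquiv.coe_toLp, ProbabilityTheory.map_pi_eq_stdGaussian,
    ProbabilityTheory.stdGaussian_cone_eq_of_norm_eq τ (u := EuclideanSpace.single 0 1)
      (by simp [hv]),
    ← ProbabilityTheory.map_pi_eq_stdGaussian,
    Measure.map_apply (by fun_prop) (measurableSet_le (by fun_prop) (by fun_prop))]
  congr 1
  ext y
  simp [EuclideanSpace.norm_eq, EuclideanSpace.inner_single_right]

theorem gaussian_cosine_threshold_fpr_general (d : ℕ) (hd : 2 ≤ d)
    (v : EuclideanSpace ℝ (Fin d)) (hv : ‖v‖ = 1)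
    (δ : ℝ) (hδ : δ ∈ Set.Ioc (0 : ℝ) 1)
    (τ : ℝ)
    (hthr : Real.sqrt (2 * Real.log (1 / δ) / ((d : ℝ) - 1)) ≤ τ) :
    (stdGaussian d {x | τ * ‖x‖ ≤ ⟪x, v⟫}).toReal ≤ δ := by
  obtain ⟨n, rfl⟩ : ∃ n, d = n + 2 := ⟨d - 2, by omega⟩
  have hdim : ((n + 2 : ℕ) : ℝ) - 1 = n + 1 := by push_cast; ring
  rw [hdim] at hthr
  have hτ : 0 ≤ τ := (sqrt_nonneg _).trans hthr
  rw [stdGaussian_cone_eq_pi (n + 1) τ hv]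
  refine ENNReal.toReal_le_of_le_ofReal hδ.1.le ((pi_gaussianReal_cone_le_exp n hτ).trans ?_)
  exact ENNReal.ofReal_le_ofReal (exp_neg_mul_sq_le_of_sqrt_le (by positivity) hδ.1 hthr)

/-- **Threshold calibration.** For `d ≥ 2`, a standard Gaussian vector `X` in `ℝ^d` and a fixed
unit vector `v`: for any target false positive rate `δ ∈ (0, 1]`, if the threshold `τ ∈ [0, 1]`
satisfies `τ ≥ √(2·ln(1/δ)/(d-1))`, then the probability that `⟪X, v⟫ ≥ τ‖X‖` (i.e. that the
cosine similarity of `X` and `v` is at least `τ`) is at most `δ`. -/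
theorem gaussian_cosine_threshold_fpr (d : ℕ) (hd : 2 ≤ d)
    (v : EuclideanSpace ℝ (Fin d)) (hv : ‖v‖ = 1)
    (δ : ℝ) (hδ : δ ∈ Set.Ioc (0 : ℝ) 1)
    (τ : ℝ) (hτ : τ ∈ Set.Icc (0 : ℝ) 1)
    (hthr : Real.sqrt (2 * Real.log (1 / δ) / ((d : ℝ) - 1)) ≤ τ) :
    (stdGaussian d {x | τ * ‖x‖ ≤ ⟪x, v⟫}).toReal ≤ δ :=
  gaussian_cosine_threshold_fpr_general d hd v hv δ hδ τ hthr
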